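/- Let P be a minimal pattern group of depth d. The group G_P is finite if and only if the stabilizer St_P(d-1) is trivial, and in that case the restriction map g ↦ g|_{X^[d]} is an isomorphism from G_P onto P. -/

import Mathlib

open List

/-- The group of automorphisms of the rooted tree `X*` (vertices = words over `X`,
root = empty word, edges `(v, vx)`), as a subgroup of the permutations of `List X`. -/
def treeAut (X : Type*) : Subgroup (Equiv.Perm (List X)) where
  carrier := {f | f [] = [] ∧ ∀ (v : List X) (x : X), ∃ y : X, f (v ++ [x]) = f v ++ [y]}
  one_mem' := ⟨rfl, fun _ x => ⟨x, rfl⟩⟩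
  mul_mem' := by
    rintro f g ⟨hf0, hf⟩ ⟨hg0, hg⟩
    refine ⟨by simp [Equiv.Perm.mul_apply, hg0, hf0], fun v x => ?_⟩
    obtain ⟨y, hy⟩ := hg v x
    obtain ⟨z, hz⟩ := hf (g v) y
    exact ⟨z, by simp [Equiv.Perm.mul_apply, hy, hz]⟩
  inv_mem' := by
    rintro f ⟨hf0, hf⟩
    have h0 : f⁻¹ [] = ([] : List _) := by
      have h : f⁻¹ (f []) = [] := by simp
      rwa [hf0] at h
    refine ⟨h0, fun v x => ?_⟩
    rcases List.eq_nil_or_concat (f⁻¹ (v ++ [x])) with h | ⟨w, z, hw⟩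
    · exfalso
      have h1 : v ++ [x] = f ([] : List _) := by
        have := congrArg (fun t => f t) h
        simpa using this
      rw [hf0] at h1
      simp at h1
    · rw [List.concat_eq_append] at hw
      obtain ⟨y, hy⟩ := hf w z
      have h2 : f w ++ [y] = v ++ [x] := by
        rw [← hy]
        have := congrArg (fun t => f t) hw
        simpa using this.symm
      have h3 := (List.append_inj' h2 rfl).1
      have h4 : w = f⁻¹ v := by rw [← h3]; simp
      exact ⟨z, by rw [hw, h4]⟩

theorem treeAut.length_apply {X : Type*} {f : Equiv.Perm (List X)} (hf : f ∈ treeAut X)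
    (v : List X) : (f v).length = v.length := by
  induction v using List.reverseRecOn with
  | nil => simp [hf.1]
  | append_singleton v x ih =>
      obtain ⟨y, hy⟩ := hf.2 v x
      simp [hy, ih]

/-- The section function: `sectFun f v w` is the word `u` with `f (v ++ w) = f v ++ u`. -/
def sectFun {X : Type*} (f : Equiv.Perm (List X)) (v w : List X) : List X :=
  (f (v ++ w)).drop v.length

theorem treeAut.apply_append {X : Type*} {f : Equiv.Perm (List X)} (hf : f ∈ treeAut X)
    (v w : List X) : f (v ++ w) = f v ++ sectFun f v w := by
  have hpre : f v <+: f (v ++ w) := by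
    induction w using List.reverseRecOn with
    | nil => simp
    | append_singleton w x ih =>
        obtain ⟨y, hy⟩ := hf.2 (v ++ w) x
        rw [← List.append_assoc, hy]
        exact ih.trans (List.prefix_append _ _)
  obtain ⟨t, ht⟩ := hpre
  have hd : sectFun f v w = t := by
    simp only [sectFun]
    rw [← ht, ← treeAut.length_apply hf v, List.drop_left]
  rw [hd, ht]

/-- The section of a tree automorphism `g` at a vertex `v`, as a tree automorphism. -/
def sect {X : Type*} (g : ↥(treeAut X)) (v : List X) : ↥(treeAut X) := by
  refine ⟨{ toFun := sectFun (g : Equiv.Perm (List X)) v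
            invFun := sectFun ((g : Equiv.Perm (List X))⁻¹) ((g : Equiv.Perm (List X)) v)
            left_inv := ?_
            right_inv := ?_ }, ?_, ?_⟩
  · intro w
    show sectFun _ _ (sectFun _ _ _) = w
    have ha := treeAut.apply_append g.2 v w
    simp only [sectFun] at ha ⊢
    rw [← ha, Equiv.Perm.inv_def, Equiv.symm_apply_apply, treeAut.length_apply g.2, List.drop_left]
  · intro w
    have hginv : (g : Equiv.Perm (List X))⁻¹ ∈ treeAut X := (treeAut X).inv_mem g.2
    show sectFun _ _ (sectFun _ _ _) = w
    have key : (v : List X) ++ sectFun ((g : Equiv.Perm (List X))⁻¹) ((g : Equiv.Perm (List X)) v) w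
        = (g : Equiv.Perm (List X))⁻¹ ((g : Equiv.Perm (List X)) v ++ w) := by
      have h1 := treeAut.apply_append hginv ((g : Equiv.Perm (List X)) v) w
      have h2 : (g : Equiv.Perm (List X))⁻¹ ((g : Equiv.Perm (List X)) v) = v := by simp
      rw [h1, h2]
    simp only [sectFun]
    simp only [sectFun] at key
    rw [key]
    simp [treeAut.length_apply g.2]
  · show sectFun _ _ [] = []
    simp only [sectFun, List.append_nil]
    exact List.drop_eq_nil_of_le (le_of_eq (treeAut.length_apply g.2 v))
  · intro w x
    show ∃ y, sectFun _ _ (w ++ [x]) = sectFun _ _ w ++ [y]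
    obtain ⟨y, hy⟩ := g.2.2 (v ++ w) x
    refine ⟨y, ?_⟩
    simp only [sectFun]
    rw [← List.append_assoc, hy, List.drop_append_of_le_length]
    rw [treeAut.length_apply g.2]
    simp

theorem sect_apply {X : Type*} (g : ↥(treeAut X)) (v w : List X) :
    ((sect g v : ↥(treeAut X)) : Equiv.Perm (List X)) w
      = sectFun (g : Equiv.Perm (List X)) v w := rfl

theorem sect_nil {X : Type*} (g : ↥(treeAut X)) : sect g [] = g := by
  apply Subtype.ext
  apply Equiv.ext
  intro w
  rw [sect_apply]
  simp [sectFun]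

theorem sect_append {X : Type*} (g : ↥(treeAut X)) (v u : List X) :
    sect g (v ++ u) = sect (sect g v) u := by
  apply Subtype.ext
  apply Equiv.ext
  intro w
  show sectFun (g : Equiv.Perm (List X)) (v ++ u) w
    = sectFun ((sect g v : ↥(treeAut X)) : Equiv.Perm (List X)) u w
  simp only [sectFun, sect_apply]
  rw [List.append_assoc, List.drop_drop, List.length_append, Nat.add_comm]

theorem sect_one {X : Type*} (v : List X) : sect (1 : ↥(treeAut X)) v = 1 := by
  apply Subtype.ext
  apply Equiv.ext
  intro w
  rw [sect_apply]
  simp [sectFun]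

theorem sect_mul {X : Type*} (g h : ↥(treeAut X)) (v : List X) :
    sect (g * h) v = sect g ((h : Equiv.Perm (List X)) v) * sect h v := by
  apply Subtype.ext
  apply Equiv.ext
  intro w
  show (((g * h : ↥(treeAut X)) : Equiv.Perm (List X)) (v ++ w)).drop v.length
      = ((g : Equiv.Perm (List X)) ((h : Equiv.Perm (List X)) v
          ++ sectFun (h : Equiv.Perm (List X)) v w)).drop
            ((h : Equiv.Perm (List X)) v).length
  have hcoe : ((g * h : ↥(treeAut X)) : Equiv.Perm (List X)) (v ++ w)
      = (g : Equiv.Perm (List X)) ((h : Equiv.Perm (List X)) (v ++ w)) := rfl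
  have hh := treeAut.apply_append h.2 v w
  rw [hcoe, hh, treeAut.length_apply h.2]

theorem sect_inv {X : Type*} (g : ↥(treeAut X)) (v : List X) :
    sect g⁻¹ v = (sect g (((g : Equiv.Perm (List X))⁻¹) v))⁻¹ := by
  have h1 : sect (g * g⁻¹) v = 1 := by rw [mul_inv_cancel, sect_one]
  have h2 := (sect_mul g g⁻¹ v).symm.trans h1
  exact eq_inv_of_mul_eq_one_right h2

/-- The automorphism group of the finite subtree `X^[d]` of words of length at most `d`
is modelled inside the permutations of the set of such words. -/
abbrev Pat (X : Type*) (d : ℕ) := Equiv.Perm {l : List X // l.length ≤ d}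

/-- The restriction homomorphism `Aut X* → Sym(X^[d])`. -/
def restr (X : Type*) (d : ℕ) : ↥(treeAut X) →* Pat X d where
  toFun g :=
    { toFun := fun w => ⟨(g : Equiv.Perm (List X)) w.1,
        by rw [treeAut.length_apply g.2]; exact w.2⟩
      invFun := fun w => ⟨(g : Equiv.Perm (List X))⁻¹ w.1,
        by rw [treeAut.length_apply ((treeAut X).inv_mem g.2)]; exact w.2⟩
      left_inv := fun w => by
        apply Subtype.ext
        simp
      right_inv := fun w => by
        apply Subtype.ext
        simp }
  map_one' := by
    apply Equiv.ext
    intro w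
    rfl
  map_mul' := fun g h => by
    apply Equiv.ext
    intro w
    rfl

/-- `Aut X^[d]`: the automorphism group of the finite tree `X^[d]`, realized as the
image of `Aut X*` under restriction (every automorphism of the finite tree extends). -/
def finAut (X : Type*) (d : ℕ) : Subgroup (Pat X d) := (restr X d).range

/-- The `n`-th level stabilizer in `Aut X*`: automorphisms fixing all words of length `≤ n`. -/
def levelStab (X : Type*) (n : ℕ) : Subgroup ↥(treeAut X) := (restr X n).ker

/-- The self-similar group of finite type `G_P` given by a pattern group `P ≤ Aut X^[d]`:
all tree automorphisms all of whose sections restrict to elements of `P` on `X^[d]`. -/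
def GP (X : Type*) (d : ℕ) (P : Subgroup (Pat X d)) : Subgroup ↥(treeAut X) where
  carrier := {g | ∀ v : List X, restr X d (sect g v) ∈ P}
  one_mem' := fun v => by rw [sect_one, map_one]; exact P.one_mem
  mul_mem' := fun {a b} ha hb v => by
    rw [sect_mul, map_mul]; exact P.mul_mem (ha _) (hb v)
  inv_mem' := fun {a} ha v => by
    rw [sect_inv, map_inv]; exact P.inv_mem (ha _)

theorem mem_GP {X : Type*} {d : ℕ} {P : Subgroup (Pat X d)} (g : ↥(treeAut X)) :
    g ∈ GP X d P ↔ ∀ v : List X, restr X d (sect g v) ∈ P := Iff.rfl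

/-- The edge relation `a →^x b` of the pattern graph `Γ_P`: the section of the pattern `a`
at the letter `x` agrees with the pattern `b` on `X^[d-1]`. -/
def patEdge (X : Type*) (d : ℕ) (a : Pat X d) (x : X) (b : Pat X d) : Prop :=
  ∀ (w : List X) (hw : w.length ≤ d - 1) (hw' : (x :: w).length ≤ d),
    ((a ⟨x :: w, hw'⟩ : {l : List X // l.length ≤ d}) : List X).tail
      = ((b ⟨w, le_trans hw (Nat.sub_le d 1)⟩ : {l : List X // l.length ≤ d}) : List X)

/-- The subgroup of `Sym(X^[d])` of elements fixing all words of length at most `k`. -/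
def patLevelStab (X : Type*) (d k : ℕ) : Subgroup (Pat X d) where
  carrier := {a | ∀ (w : List X) (hw : w.length ≤ d), w.length ≤ k → a ⟨w, hw⟩ = ⟨w, hw⟩}
  one_mem' := fun _ _ _ => rfl
  mul_mem' := fun {a b} ha hb w hw hk => by
    have h1 := hb w hw hk
    have h2 := ha w hw hk
    show a (b ⟨w, hw⟩) = ⟨w, hw⟩
    rw [h1, h2]
  inv_mem' := fun {a} ha w hw hk => by
    have h1 := ha w hw hk
    have h2 : a⁻¹ (a ⟨w, hw⟩) = ⟨w, hw⟩ := by simp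
    rwa [h1] at h2

/-- Level-transitivity: the group acts transitively on every level `X^n` of the tree. -/
def LevelTrans {X : Type*} (G : Subgroup ↥(treeAut X)) : Prop :=
  ∀ u v : List X, u.length = v.length → ∃ g ∈ G, (g : Equiv.Perm (List X)) u = v

/-- Topological finite generation of a closed subgroup `G ≤ Aut X*`, expressed
concretely: some finite subset of `G` generates a subgroup which is dense in `G`
for the profinite (congruence) topology of `Aut X*`. -/
def TopFG {X : Type*} (G : Subgroup ↥(treeAut X)) : Prop :=
  ∃ S : Finset ↥(treeAut X), (S : Set ↥(treeAut X)) ⊆ (G : Set ↥(treeAut X)) ∧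
    ∀ g ∈ G, ∀ n : ℕ, ∃ h ∈ Subgroup.closure (S : Set ↥(treeAut X)),
      ∀ w : List X, w.length ≤ n →
        (h : Equiv.Perm (List X)) w = (g : Equiv.Perm (List X)) w

/-!
Restriction to `X^[d]` maps `G_P` onto `P` by minimality. If `St_P(d-1)` is trivial it is also
injective: when `g ∈ G_P` fixes `X^[d]`, the pattern of each section `g_x` at a letter lies in
`St_P(d-1)`, so `g_x ∈ G_P` fixes `X^[d]` again, and induction on words gives `g = 1`.
Conversely, a nontrivial element of `St_P(d-1)` lifts to some `g ∈ G_P` fixing `X^[d-1]`.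
Grafting `g` at a vertex `v` (acting as `g` below `v`, trivially elsewhere) stays in `G_P`,
since every section of the graft is a section of `g` or has trivial pattern; grafts at deeper
and deeper vertices are pairwise distinct, so `G_P` is infinite.
-/

section

variable {X : Type*}

theorem restr_apply_coe {d : ℕ} (g : ↥(treeAut X)) (w : {l : List X // l.length ≤ d}) :
    ((restr X d g w : {l : List X // l.length ≤ d}) : List X) = (g : Equiv.Perm (List X)) w :=
  rfl

theorem mem_levelStab_iff {n : ℕ} {g : ↥(treeAut X)} :
    g ∈ levelStab X n ↔ ∀ w : List X, w.length ≤ n → (g : Equiv.Perm (List X)) w = w := by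
  simp only [levelStab, MonoidHom.mem_ker, Equiv.ext_iff, Subtype.ext_iff, restr_apply_coe,
    Equiv.Perm.coe_one, id_eq, Subtype.forall]

theorem mem_levelStab_of_restr_mem_patLevelStab {d k : ℕ} (hk : k ≤ d) {g : ↥(treeAut X)}
    (hg : restr X d g ∈ patLevelStab X d k) : g ∈ levelStab X k :=
  mem_levelStab_iff.mpr fun w hw => congrArg Subtype.val (hg w (hw.trans hk) hw)

theorem sect_apply_of_apply_append_eq {g : ↥(treeAut X)} {v u : List X}
    (h : (g : Equiv.Perm (List X)) (v ++ u) = v ++ u) :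
    (sect g v : Equiv.Perm (List X)) u = u := by
  rw [sect_apply, sectFun, h, List.drop_left]

theorem sect_mem_GP {d : ℕ} {P : Subgroup (Pat X d)} {g : ↥(treeAut X)}
    (hg : g ∈ GP X d P) (v : List X) : sect g v ∈ GP X d P :=
  fun u => by rw [← sect_append]; exact hg (v ++ u)

theorem sect_singleton_mem_levelStab {d : ℕ} (hd : 1 ≤ d) {P : Subgroup (Pat X d)}
    (hbot : P ⊓ patLevelStab X d (d - 1) = ⊥) {g : ↥(treeAut X)} (hg : g ∈ GP X d P)
    (hgd : g ∈ levelStab X d) (x : X) : sect g [x] ∈ levelStab X d := by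
  have hstab : restr X d (sect g [x]) ∈ patLevelStab X d (d - 1) := fun u _ hu =>
    Subtype.ext <| sect_apply_of_apply_append_eq <|
      mem_levelStab_iff.mp hgd _ (by simp only [List.singleton_append, List.length_cons]; omega)
  exact Subgroup.mem_bot.mp (hbot ▸ Subgroup.mem_inf.mpr ⟨hg [x], hstab⟩)

theorem GP_inf_levelStab_eq_bot {d : ℕ} (hd : 1 ≤ d) {P : Subgroup (Pat X d)}
    (hbot : P ⊓ patLevelStab X d (d - 1) = ⊥) : GP X d P ⊓ levelStab X d = ⊥ := by
  refine (Subgroup.eq_bot_iff_forall _).mpr ?_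
  rintro g ⟨hg, hgd⟩
  refine Subtype.ext <| Equiv.ext fun w => ?_
  induction w generalizing g with
  | nil => exact g.2.1
  | cons x w ih =>
    have hx : (g : Equiv.Perm (List X)) [x] = [x] := mem_levelStab_iff.mp hgd [x] (by simpa)
    have hsect : (sect g [x] : Equiv.Perm (List X)) w = w :=
      ih (sect g [x]) (sect_mem_GP hg [x]) (sect_singleton_mem_levelStab hd hbot hg hgd x)
    calc (g : Equiv.Perm (List X)) ([x] ++ w)
        = (g : Equiv.Perm (List X)) [x] ++ (sect g [x] : Equiv.Perm (List X)) w :=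
          treeAut.apply_append g.2 [x] w
      _ = x :: w := by rw [hx, hsect]; rfl

def prefixEquiv (v : List X) : List X ≃ {w : List X // v <+: w} where
  toFun t := ⟨v ++ t, List.prefix_append v t⟩
  invFun w := w.1.drop v.length
  left_inv t := List.drop_left
  right_inv := fun ⟨_, t, ht⟩ => Subtype.ext (by subst ht; simp)

open Classical in
noncomputable def graftPerm (v : List X) (g : ↥(treeAut X)) : Equiv.Perm (List X) :=
  (g : Equiv.Perm (List X)).extendDomain (prefixEquiv v)

theorem graftPerm_apply_append (v : List X) (g : ↥(treeAut X)) (t : List X) :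
    graftPerm v g (v ++ t) = v ++ (g : Equiv.Perm (List X)) t := by
  classical exact Equiv.Perm.extendDomain_apply_image _ (prefixEquiv v) t

theorem graftPerm_apply_of_not_prefix {v w : List X} (g : ↥(treeAut X)) (h : ¬ v <+: w) :
    graftPerm v g w = w := by
  classical exact Equiv.Perm.extendDomain_apply_not_subtype _ (prefixEquiv v) h

theorem graftPerm_apply_of_length_le {v w : List X} (g : ↥(treeAut X)) (h : w.length ≤ v.length) :
    graftPerm v g w = w := by
  by_cases hvw : v <+: w
  · obtain rfl := hvw.eq_of_length (le_antisymm hvw.length_le h)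
    simpa [g.2.1] using graftPerm_apply_append v g []
  · exact graftPerm_apply_of_not_prefix g hvw

theorem graftPerm_mem_treeAut (v : List X) (g : ↥(treeAut X)) : graftPerm v g ∈ treeAut X := by
  refine ⟨graftPerm_apply_of_length_le g (Nat.zero_le _), fun w x => ?_⟩
  by_cases hvw : v <+: w
  · obtain ⟨t, rfl⟩ := hvw
    obtain ⟨y, hy⟩ := g.2.2 t x
    exact ⟨y, by simp only [List.append_assoc, graftPerm_apply_append, hy]⟩
  · refine ⟨x, ?_⟩
    rw [graftPerm_apply_of_not_prefix g hvw]
    by_cases hvwx : v <+: w ++ [x]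
    · exact graftPerm_apply_of_length_le g
        (congrArg List.length (List.prefix_concat_iff.mp hvwx |>.resolve_right hvw)).ge
    · exact graftPerm_apply_of_not_prefix g hvwx

noncomputable def graft (v : List X) (g : ↥(treeAut X)) : ↥(treeAut X) :=
  ⟨graftPerm v g, graftPerm_mem_treeAut v g⟩

theorem sect_graft_append (v u : List X) (g : ↥(treeAut X)) :
    sect (graft v g) (v ++ u) = sect g u := by
  refine Subtype.ext <| Equiv.ext fun w => ?_
  simp only [sect_apply, sectFun, graft, List.append_assoc, graftPerm_apply_append,
    List.length_append]
  exact List.drop_length_add_append _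

theorem sect_graft_mem_levelStab_of_not_prefix {d : ℕ} {v u : List X} {g : ↥(treeAut X)}
    (hg : g ∈ levelStab X (d - 1)) (hu : ¬ v <+: u) : sect (graft v g) u ∈ levelStab X d := by
  refine mem_levelStab_iff.mpr fun w hw => sect_apply_of_apply_append_eq ?_
  by_cases huw : v <+: u ++ w
  · obtain ⟨s, rfl⟩ := ((List.prefix_or_prefix_of_prefix huw (List.prefix_append u w)).resolve_left
      hu)
    obtain ⟨r, rfl⟩ := (List.prefix_append_right_inj u).mp huw
    have hs : s ≠ [] := by rintro rfl; exact hu (by simp)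
    have hr : r.length ≤ d - 1 := by
      have := List.length_pos_iff.mpr hs
      simp only [List.length_append] at hw
      omega
    show graftPerm (u ++ s) g (u ++ (s ++ r)) = u ++ (s ++ r)
    rw [← List.append_assoc, graftPerm_apply_append, mem_levelStab_iff.mp hg r hr]
  · exact graftPerm_apply_of_not_prefix g huw

theorem graft_mem_GP {d : ℕ} {P : Subgroup (Pat X d)} {g : ↥(treeAut X)} (hg : g ∈ GP X d P)
    (hgs : g ∈ levelStab X (d - 1)) (v : List X) : graft v g ∈ GP X d P := by
  intro u
  by_cases hvu : v <+: u
  · obtain ⟨u', rfl⟩ := hvu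
    rw [sect_graft_append]
    exact hg u'
  · rw [sect_graft_mem_levelStab_of_not_prefix hgs hvu]
    exact P.one_mem

theorem infinite_GP_of_mem_levelStab [Nonempty X] {d : ℕ} {P : Subgroup (Pat X d)}
    {g : ↥(treeAut X)} (hg : g ∈ GP X d P) (hgs : g ∈ levelStab X (d - 1)) (hne : g ≠ 1) :
    Infinite (GP X d P) := by
  obtain ⟨p, hp⟩ : ∃ p, (g : Equiv.Perm (List X)) p ≠ p := by
    by_contra! h
    exact hne (Subtype.ext (Equiv.ext h))
  obtain ⟨x₀⟩ := ‹Nonempty X›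
  let ray (n : ℕ) : List X := List.replicate (n * (p.length + 1)) x₀
  let F (n : ℕ) : GP X d P := ⟨graft (ray n) g, graft_mem_GP hg hgs (ray n)⟩
  refine Infinite.of_injective F (Function.Injective.of_lt_imp_ne fun m n hmn hF => ?_)
  have hmoved : graftPerm (ray m) g (ray m ++ p) ≠ ray m ++ p := by
    rw [graftPerm_apply_append]
    exact fun h => hp (List.append_cancel_left h)
  have hfixed : graftPerm (ray n) g (ray m ++ p) = ray m ++ p := by
    refine graftPerm_apply_of_length_le g ?_
    have := Nat.mul_le_mul_right (p.length + 1) hmn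
    simp only [ray, List.length_append, List.length_replicate]
    rw [Nat.succ_mul] at this
    omega
  have hsame := congrArg (fun f : GP X d P => (f : Equiv.Perm (List X)) (ray m ++ p)) hF
  exact hmoved (hsame.trans hfixed)

end

theorem statement10_general {X : Type*} [Fintype X] [Nontrivial X] (d : ℕ) (hd : 1 ≤ d)
    (P : Subgroup (Pat X d))
    (hmin : P = Subgroup.map (restr X d) (GP X d P)) :
    (Finite ↥(GP X d P) ↔ P ⊓ patLevelStab X d (d - 1) = ⊥) ∧
    (P ⊓ patLevelStab X d (d - 1) = ⊥ →
      ∃ e : ↥(GP X d P) ≃* ↥P, ∀ g : ↥(GP X d P),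
        ((e g : ↥P) : Pat X d) = restr X d (g : ↥(treeAut X))) := by
  have iso (hbot : P ⊓ patLevelStab X d (d - 1) = ⊥) : ∃ e : ↥(GP X d P) ≃* ↥P,
      ∀ g : ↥(GP X d P), ((e g : ↥P) : Pat X d) = restr X d (g : ↥(treeAut X)) := by
    have hinj : Function.Injective ((restr X d).subgroupMap (GP X d P)) :=
      (injective_iff_map_eq_one _).mpr fun g hg => Subtype.ext <|
        (Subgroup.eq_bot_iff_forall _).mp (GP_inf_levelStab_eq_bot hd hbot) g
          ⟨g.2, congrArg Subtype.val hg⟩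
    exact ⟨(MulEquiv.ofBijective _ ⟨hinj, (restr X d).subgroupMap_surjective _⟩).trans
      (MulEquiv.subgroupCongr hmin.symm), fun _ => rfl⟩
  refine ⟨⟨fun hfin => ?_, fun hbot => ?_⟩, iso⟩
  · refine (Subgroup.eq_bot_iff_forall _).mpr ?_
    rintro a ⟨haP, haS⟩
    obtain ⟨g, hg, rfl⟩ : a ∈ (GP X d P).map (restr X d) := hmin ▸ haP
    by_contra hne
    have := infinite_GP_of_mem_levelStab hg
      (mem_levelStab_of_restr_mem_patLevelStab (Nat.sub_le d 1) haS) fun h => hne (h ▸ map_one _)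
    exact not_finite (GP X d P)
  · have : Finite {l : List X // l.length ≤ d} := (List.finite_length_le X d).to_subtype
    obtain ⟨e, -⟩ := iso hbot
    exact Finite.of_equiv P e.symm.toEquiv

/-- for a minimal pattern group `P` of depth `d`, the group `G_P` is finite
iff `St_P(d-1)` is trivial, and in that case restriction to `X^[d]` is an isomorphism
`G_P ≅ P`. -/
theorem statement10 {X : Type*} [Fintype X] [Nontrivial X] (d : ℕ) (hd : 1 ≤ d)
    (P : Subgroup (Pat X d)) (hP : P ≤ finAut X d)
    (hmin : P = Subgroup.map (restr X d) (GP X d P)) :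
    (Finite ↥(GP X d P) ↔ P ⊓ patLevelStab X d (d - 1) = ⊥) ∧
    (P ⊓ patLevelStab X d (d - 1) = ⊥ →
      ∃ e : ↥(GP X d P) ≃* ↥P, ∀ g : ↥(GP X d P),
        ((e g : ↥P) : Pat X d) = restr X d (g : ↥(treeAut X))) :=
  statement10_general d hd P hmin
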